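/- First cohomology of a bigraded complex: over a field there are isomorphisms B^1(C,D) ≅ B^1(N_0, D̄) ⊕ B^1(C^{0,•}, D_{0,1}), Z^1(C,D) ≅ Z^1(N_0, D̄) ⊕ ker(ρ_1), and H^1(C,D) ≅ H^1(N_0, D̄) ⊕ ker(ρ_1)/B^1(C^{0,•}, D_{0,1}). -/

import Mathlib

open DirectSum

variable {R M : Type} [CommRing R] [AddCommGroup M] [Module R M]

/-- Projection `π_q` of a bigraded module onto the part of second degree `≥ q`,
along the bigrading. -/
noncomputable def bproj (𝒞 : ℤ × ℤ → Submodule R M) [DirectSum.Decomposition 𝒞] (q : ℤ) :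
    M →ₗ[R] M :=
  (DirectSum.coeLinearMap 𝒞).comp <|
    (DFinsupp.filterLinearMap R (fun pq : ℤ × ℤ => 𝒞 pq) (fun pq => q ≤ pq.2)).comp
      (DirectSum.decomposeLinearEquiv 𝒞).toLinearMap

/-- The bihomogeneous component of bidegree `(p, q)` of an element. -/
noncomputable def bcomp (𝒞 : ℤ × ℤ → Submodule R M) [DirectSum.Decomposition 𝒞] (p q : ℤ)
    (x : M) : M :=
  (DirectSum.decompose 𝒞 x (p, q) : M)

/-- The total-degree-`k` part `C^k = ⊕_{p+q=k} C^{p,q}`. -/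
def bdeg (𝒞 : ℤ × ℤ → Submodule R M) (k : ℤ) : Submodule R M :=
  ⨆ p : ℤ, 𝒞 (p, k - p)

/-- The part of second degree `q`, `⊕_p C^{p,q}`. -/
def brow (𝒞 : ℤ × ℤ → Submodule R M) (q : ℤ) : Submodule R M :=
  ⨆ p : ℤ, 𝒞 (p, q)

/-- The decreasing column filtration `F^p C = ⊕_{i ≥ p, j} C^{i,j}`. -/
def bfil (𝒞 : ℤ × ℤ → Submodule R M) (p : ℤ) : Submodule R M :=
  ⨆ (i : ℤ) (_ : p ≤ i) (j : ℤ), 𝒞 (i, j)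

/-!
In total degree one a first-quadrant complex is `C^{0,1} ⊕ C^{1,0}`, and the projection `π₁`
onto `C^{0,1}` (`bproj 𝒞 1`) splits everything. A cocycle `Y + α` is killed by `π₁` exactly
when it lies in `Z¹(N₀, D̄)`; the `(0,1)`-parts `Y` of cocycles are those for which
`D_{2,-1} Y + D_{1,0} α` can be cancelled by `D_{1,0}` of a `D_{0,1}`-cocycle, i.e. `ker ρ₁`.
On coboundaries `D f = D_{1,0} f + D_{0,1} f` the projection has kernel `B¹(N₀, D̄)` and image
`B¹(C^{0,•}, D_{0,1})`. Over a field these short exact sequences split, and dividing the cocycle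
sequence by the coboundary sequence keeps it exact, which gives the splitting of `H¹`.
-/

section Splitting

variable {K A B C : Type} [DivisionRing K] [AddCommGroup A] [Module K A]
  [AddCommGroup B] [Module K B] [AddCommGroup C] [Module K C]

theorem Function.Exact.nonempty_linearEquiv_prod {f : A →ₗ[K] B} {g : B →ₗ[K] C}
    (h : Function.Exact f g) (hf : Function.Injective f) (hg : Function.Surjective g) :
    Nonempty (B ≃ₗ[K] A × C) := by
  obtain ⟨l, hl⟩ := g.exists_rightInverse_of_surjective (LinearMap.range_eq_top.2 hg)
  exact ⟨(h.splitSurjectiveEquiv hf ⟨l, hl⟩).1⟩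

end Splitting

namespace Submodule

theorem exact_inclusion_submoduleMap {K V W : Type} [Ring K] [AddCommGroup V] [Module K V]
    [AddCommGroup W] [Module K W] (g : V →ₗ[K] W) (Z : Submodule K V) :
    Function.Exact (inclusion (inf_le_left : Z ⊓ LinearMap.ker g ≤ Z)) (g.submoduleMap Z) := by
  rintro ⟨x, hx⟩
  simp [Subtype.ext_iff, hx]

variable {K V W : Type} [DivisionRing K] [AddCommGroup V] [Module K V]
  [AddCommGroup W] [Module K W]

theorem nonempty_equiv_inf_ker_prod_map (g : V →ₗ[K] W) (Z : Submodule K V) :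
    Nonempty (Z ≃ₗ[K] ↥(Z ⊓ LinearMap.ker g) × ↥(Z.map g)) :=
  (exact_inclusion_submoduleMap g Z).nonempty_linearEquiv_prod (inclusion_injective _)
    (g.submoduleMap_surjective Z)

theorem nonempty_quotient_equiv_prod (g : V →ₗ[K] W) (Z U : Submodule K V) :
    Nonempty ((Z ⧸ U.comap Z.subtype) ≃ₗ[K]
      (↥(Z ⊓ LinearMap.ker g) ⧸ U.comap (Z ⊓ LinearMap.ker g).subtype) ×
        (↥(Z.map g) ⧸ ((Z ⊓ U).map g).comap (Z.map g).subtype)) := by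
  have hf : U.comap (Z ⊓ LinearMap.ker g).subtype ≤
      (U.comap Z.subtype).comap (inclusion inf_le_left) := le_rfl
  have hg : U.comap Z.subtype ≤
      (((Z ⊓ U).map g).comap (Z.map g).subtype).comap (g.submoduleMap Z) := by
    rintro ⟨x, hxZ⟩ hxU
    exact ⟨x, ⟨hxZ, hxU⟩, rfl⟩
  refine Function.Exact.nonempty_linearEquiv_prod
    (((exact_inclusion_submoduleMap g Z).exact_mapQ_iff hf hg).2 ?_) ?_ ?_
  · rintro y ⟨-, ⟨u, ⟨huZ, huU⟩, hu⟩⟩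
    exact ⟨⟨u, huZ⟩, huU, Subtype.ext hu⟩
  · rw [← LinearMap.ker_eq_bot, ker_mapQ, eq_bot_iff]
    rintro _ ⟨x, hx, rfl⟩
    exact (Quotient.mk_eq_zero _).2 hx
  · intro y
    obtain ⟨y, rfl⟩ := mkQ_surjective _ y
    obtain ⟨x, rfl⟩ := g.submoduleMap_surjective Z y
    exact ⟨Quotient.mk x, rfl⟩

end Submodule

namespace DirectSum.Decomposition

theorem eq_zero_of_add_add_eq_zero {ι : Type} [DecidableEq ι] (𝒞 : ι → Submodule R M)
    [Decomposition 𝒞] {i j k : ι} {a b c : M} (ha : a ∈ 𝒞 i) (hb : b ∈ 𝒞 j) (hc : c ∈ 𝒞 k)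
    (hij : i ≠ j) (hik : i ≠ k) (hjk : j ≠ k) (h : a + b + c = 0) :
    a = 0 ∧ b = 0 ∧ c = 0 := by
  have component (l : ι) :
      (decompose 𝒞 a l : M) + decompose 𝒞 b l + decompose 𝒞 c l = 0 := by
    simpa [decompose_add] using congrArg (fun x => (decompose 𝒞 x l : M)) h
  refine ⟨?_, ?_, ?_⟩
  · simpa [decompose_of_mem_same 𝒞 ha, decompose_of_mem_ne 𝒞 hb hij.symm,
      decompose_of_mem_ne 𝒞 hc hik.symm] using component i
  · simpa [decompose_of_mem_ne 𝒞 ha hij, decompose_of_mem_same 𝒞 hb,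
      decompose_of_mem_ne 𝒞 hc hjk.symm] using component j
  · simpa [decompose_of_mem_ne 𝒞 ha hik, decompose_of_mem_ne 𝒞 hb hjk,
      decompose_of_mem_same 𝒞 hc] using component k

end DirectSum.Decomposition

theorem bproj_of_mem (𝒞 : ℤ × ℤ → Submodule R M) [DirectSum.Decomposition 𝒞] {p q : ℤ}
    {x : M} (hx : x ∈ 𝒞 (p, q)) (q' : ℤ) : bproj 𝒞 q' x = if q' ≤ q then x else 0 := by
  classical
  lift x to 𝒞 (p, q) using hx
  simp only [bproj, LinearMap.comp_apply, LinearEquiv.coe_coe, decomposeLinearEquiv_apply,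
    decompose_coe]
  rw [DFinsupp.filterLinearMap_apply, DirectSum.of, DFinsupp.singleAddHom_apply,
    DFinsupp.filter_single]
  split_ifs
  · exact coeLinearMap_of 𝒞 (p, q) x
  · exact map_zero _

theorem bproj_of_mem_of_le (𝒞 : ℤ × ℤ → Submodule R M) [Decomposition 𝒞] {p q q' : ℤ} {x : M}
    (hx : x ∈ 𝒞 (p, q)) (h : q' ≤ q) : bproj 𝒞 q' x = x := by
  rw [bproj_of_mem 𝒞 hx, if_pos h]

theorem bproj_of_mem_of_lt (𝒞 : ℤ × ℤ → Submodule R M) [Decomposition 𝒞] {p q q' : ℤ} {x : M}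
    (hx : x ∈ 𝒞 (p, q)) (h : q < q') : bproj 𝒞 q' x = 0 := by
  rw [bproj_of_mem 𝒞 hx, if_neg h.not_ge]

theorem bproj_one_add_of_mem (𝒞 : ℤ × ℤ → Submodule R M) [Decomposition 𝒞] {Y α : M}
    (hY : Y ∈ 𝒞 (0, 1)) (hα : α ∈ 𝒞 (1, 0)) : bproj 𝒞 1 (Y + α) = Y := by
  rw [map_add, bproj_of_mem_of_le 𝒞 hY le_rfl, bproj_of_mem_of_lt 𝒞 hα zero_lt_one, add_zero]

section FirstQuadrant

variable (𝒞 : ℤ × ℤ → Submodule R M)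

theorem bdeg_zero_of_firstQuadrant (hfq : ∀ p q : ℤ, p < 0 ∨ q < 0 → 𝒞 (p, q) = ⊥) :
    bdeg 𝒞 0 = 𝒞 (0, 0) := by
  refine le_antisymm (iSup_le fun p => ?_) (le_iSup_of_le 0 le_rfl)
  rcases lt_trichotomy p 0 with hp | rfl | hp
  · rw [hfq p (0 - p) (Or.inl hp)]; exact bot_le
  · rfl
  · rw [hfq p (0 - p) (Or.inr (by omega))]; exact bot_le

theorem bdeg_one_of_firstQuadrant (hfq : ∀ p q : ℤ, p < 0 ∨ q < 0 → 𝒞 (p, q) = ⊥) :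
    bdeg 𝒞 1 = 𝒞 (0, 1) ⊔ 𝒞 (1, 0) := by
  refine le_antisymm (iSup_le fun p => ?_)
    (sup_le (le_iSup_of_le 0 le_rfl) (le_iSup_of_le 1 le_rfl))
  rcases (by omega : p < 0 ∨ p = 0 ∨ p = 1 ∨ 1 < p) with hp | rfl | rfl | hp
  · rw [hfq p (1 - p) (Or.inl hp)]; exact bot_le
  · exact le_sup_left
  · exact le_sup_right
  · rw [hfq p (1 - p) (Or.inr (by omega))]; exact bot_le

end FirstQuadrant

structure IsFirstQuadrantSplitting (𝒞 : ℤ × ℤ → Submodule R M) (D21 D10 D01 D : M →ₗ[R] M) :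
    Prop where
  eq_bot_of_neg : ∀ p q : ℤ, p < 0 ∨ q < 0 → 𝒞 (p, q) = ⊥
  map_D21_le : ∀ p q : ℤ, (𝒞 (p, q)).map D21 ≤ 𝒞 (p + 2, q - 1)
  map_D10_le : ∀ p q : ℤ, (𝒞 (p, q)).map D10 ≤ 𝒞 (p + 1, q)
  map_D01_le : ∀ p q : ℤ, (𝒞 (p, q)).map D01 ≤ 𝒞 (p, q + 1)
  eq_add : D = D21 + D10 + D01

namespace IsFirstQuadrantSplitting

open LinearMap Submodule

variable {𝒞 : ℤ × ℤ → Submodule R M} {D21 D10 D01 D : M →ₗ[R] M}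

theorem D21_mem (hS : IsFirstQuadrantSplitting 𝒞 D21 D10 D01 D) {p q : ℤ} {x : M}
    (hx : x ∈ 𝒞 (p, q)) : D21 x ∈ 𝒞 (p + 2, q - 1) :=
  hS.map_D21_le p q (mem_map_of_mem hx)

theorem D10_mem (hS : IsFirstQuadrantSplitting 𝒞 D21 D10 D01 D) {p q : ℤ} {x : M}
    (hx : x ∈ 𝒞 (p, q)) : D10 x ∈ 𝒞 (p + 1, q) :=
  hS.map_D10_le p q (mem_map_of_mem hx)

theorem D01_mem (hS : IsFirstQuadrantSplitting 𝒞 D21 D10 D01 D) {p q : ℤ} {x : M}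
    (hx : x ∈ 𝒞 (p, q)) : D01 x ∈ 𝒞 (p, q + 1) :=
  hS.map_D01_le p q (mem_map_of_mem hx)

theorem D21_eq_zero (hS : IsFirstQuadrantSplitting 𝒞 D21 D10 D01 D) {p : ℤ} {x : M}
    (hx : x ∈ 𝒞 (p, 0)) : D21 x = 0 := by
  have h := hS.D21_mem hx
  rwa [hS.eq_bot_of_neg (p + 2) (0 - 1) (Or.inr (by norm_num)), mem_bot] at h

theorem D_apply (hS : IsFirstQuadrantSplitting 𝒞 D21 D10 D01 D) (x : M) :
    D x = D21 x + D10 x + D01 x := by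
  rw [hS.eq_add]
  rfl

theorem D_apply_of_mem_zero_zero (hS : IsFirstQuadrantSplitting 𝒞 D21 D10 D01 D) {f : M}
    (hf : f ∈ 𝒞 (0, 0)) : D f = D10 f + D01 f := by
  rw [hS.D_apply, hS.D21_eq_zero hf, zero_add]

theorem map_bdeg_zero_le_cocycles (hS : IsFirstQuadrantSplitting 𝒞 D21 D10 D01 D)
    (hD : D ∘ₗ D = 0) : (bdeg 𝒞 0).map D ≤ bdeg 𝒞 1 ⊓ ker D := by
  rw [bdeg_zero_of_firstQuadrant 𝒞 hS.eq_bot_of_neg, bdeg_one_of_firstQuadrant 𝒞 hS.eq_bot_of_neg]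
  rintro _ ⟨f, hf, rfl⟩
  refine ⟨?_, congr($hD f)⟩
  rw [hS.D_apply_of_mem_zero_zero hf, add_comm]
  exact add_mem_sup (hS.D01_mem hf) (hS.D10_mem hf)

variable [Decomposition 𝒞]

theorem bproj_D_apply_of_mem_zero_zero (hS : IsFirstQuadrantSplitting 𝒞 D21 D10 D01 D) {f : M}
    (hf : f ∈ 𝒞 (0, 0)) : bproj 𝒞 1 (D f) = D01 f := by
  have h10 : D10 f ∈ 𝒞 (1, 0) := hS.D10_mem hf
  have h01 : D01 f ∈ 𝒞 (0, 1) := hS.D01_mem hf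
  rw [hS.D_apply_of_mem_zero_zero hf, map_add, bproj_of_mem_of_lt 𝒞 h10 zero_lt_one,
    bproj_of_mem_of_le 𝒞 h01 le_rfl, zero_add]

theorem D_add_eq_zero_iff (hS : IsFirstQuadrantSplitting 𝒞 D21 D10 D01 D) {Y α : M}
    (hY : Y ∈ 𝒞 (0, 1)) (hα : α ∈ 𝒞 (1, 0)) :
    D (Y + α) = 0 ↔ D21 Y + D10 α = 0 ∧ D10 Y + D01 α = 0 ∧ D01 Y = 0 := by
  have expand : D (Y + α) = (D21 Y + D10 α) + (D10 Y + D01 α) + D01 Y := by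
    rw [map_add, hS.D_apply, hS.D_apply, hS.D21_eq_zero hα]
    abel
  have h20 : D21 Y + D10 α ∈ 𝒞 (2, 0) := add_mem (hS.D21_mem hY) (hS.D10_mem hα)
  have h11 : D10 Y + D01 α ∈ 𝒞 (1, 1) := add_mem (hS.D10_mem hY) (hS.D01_mem hα)
  rw [expand]
  constructor
  · exact Decomposition.eq_zero_of_add_add_eq_zero 𝒞 h20 h11 (hS.D01_mem hY)
      (by decide) (by decide) (by decide)
  · rintro ⟨h₁, h₂, h₃⟩
    rw [h₁, h₂, h₃, add_zero, add_zero]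

theorem mem_cocycles_iff (hS : IsFirstQuadrantSplitting 𝒞 D21 D10 D01 D) {x : M} :
    x ∈ bdeg 𝒞 1 ⊓ ker D ↔ ∃ Y ∈ 𝒞 (0, 1), ∃ α ∈ 𝒞 (1, 0), x = Y + α ∧
      D21 Y + D10 α = 0 ∧ D10 Y + D01 α = 0 ∧ D01 Y = 0 := by
  rw [mem_inf, bdeg_one_of_firstQuadrant 𝒞 hS.eq_bot_of_neg, mem_sup, mem_ker]
  constructor
  · rintro ⟨⟨Y, hY, α, hα, rfl⟩, hx⟩
    exact ⟨Y, hY, α, hα, rfl, (hS.D_add_eq_zero_iff hY hα).1 hx⟩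
  · rintro ⟨Y, hY, α, hα, rfl, hD⟩
    exact ⟨⟨Y, hY, α, hα, rfl⟩, (hS.D_add_eq_zero_iff hY hα).2 hD⟩

theorem map_bdeg_zero_inf_ker_bproj (hS : IsFirstQuadrantSplitting 𝒞 D21 D10 D01 D) :
    (bdeg 𝒞 0).map D ⊓ ker (bproj 𝒞 1) = (𝒞 (0, 0) ⊓ ker D01).map D10 := by
  rw [bdeg_zero_of_firstQuadrant 𝒞 hS.eq_bot_of_neg]
  ext x
  simp only [mem_inf, mem_map, mem_ker]
  constructor
  · rintro ⟨⟨f, hf, rfl⟩, hx⟩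
    rw [hS.bproj_D_apply_of_mem_zero_zero hf] at hx
    exact ⟨f, ⟨hf, hx⟩, by rw [hS.D_apply_of_mem_zero_zero hf, hx, add_zero]⟩
  · rintro ⟨f, ⟨hf, hf01⟩, rfl⟩
    refine ⟨⟨f, hf, by rw [hS.D_apply_of_mem_zero_zero hf, hf01, add_zero]⟩, ?_⟩
    exact bproj_of_mem_of_lt 𝒞 (hS.D10_mem hf : D10 f ∈ 𝒞 (1, 0)) zero_lt_one

theorem map_bproj_map_bdeg_zero (hS : IsFirstQuadrantSplitting 𝒞 D21 D10 D01 D) :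
    ((bdeg 𝒞 0).map D).map (bproj 𝒞 1) = (𝒞 (0, 0)).map D01 := by
  rw [bdeg_zero_of_firstQuadrant 𝒞 hS.eq_bot_of_neg, ← Submodule.map_comp]
  refine SetLike.coe_injective ?_
  rw [map_coe, map_coe]
  exact Set.EqOn.image_eq fun f hf => hS.bproj_D_apply_of_mem_zero_zero hf

theorem cocycles_inf_ker_bproj (hS : IsFirstQuadrantSplitting 𝒞 D21 D10 D01 D) :
    bdeg 𝒞 1 ⊓ ker D ⊓ ker (bproj 𝒞 1) = 𝒞 (1, 0) ⊓ ker D10 ⊓ ker D01 := by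
  ext x
  rw [mem_inf, hS.mem_cocycles_iff]
  simp only [mem_inf, mem_ker]
  constructor
  · rintro ⟨⟨Y, hY, α, hα, rfl, h₁, h₂, -⟩, hx⟩
    obtain rfl : Y = 0 := by rwa [bproj_one_add_of_mem 𝒞 hY hα] at hx
    simp_all
  · rintro ⟨⟨hx, h10⟩, h01⟩
    refine ⟨⟨0, zero_mem _, x, hx, (zero_add x).symm, ?_⟩, ?_⟩
    · simp [h10, h01]
    · exact bproj_of_mem_of_lt 𝒞 hx zero_lt_one

theorem coe_map_bproj_cocycles (hS : IsFirstQuadrantSplitting 𝒞 D21 D10 D01 D) :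
    (((bdeg 𝒞 1 ⊓ ker D).map (bproj 𝒞 1) : Submodule R M) : Set M) =
      {Y : M | Y ∈ 𝒞 (0, 1) ∧ D01 Y = 0 ∧ ∃ α ∈ 𝒞 (1, 0), D01 α + D10 Y = 0 ∧
        D21 Y + D10 α ∈ (𝒞 (1, 0) ⊓ ker D01).map D10} := by
  ext Y
  rw [SetLike.mem_coe, mem_map]
  constructor
  · rintro ⟨_, hx, rfl⟩
    obtain ⟨Y, hY, α, hα, rfl, h₁, h₂, h₃⟩ := hS.mem_cocycles_iff.1 hx
    rw [bproj_one_add_of_mem 𝒞 hY hα]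
    exact ⟨hY, h₃, α, hα, by rw [add_comm, h₂], by rw [h₁]; exact zero_mem _⟩
  · rintro ⟨hY, h₃, α, hα, h₂, β, ⟨hβ, hβ01⟩, hβα⟩
    -- correcting `α` by `β` kills the `(2,0)`-component of `D (Y + α)`
    refine ⟨Y + (α - β), hS.mem_cocycles_iff.2 ⟨Y, hY, α - β, sub_mem hα hβ, rfl, ?_, ?_, h₃⟩,
      bproj_one_add_of_mem 𝒞 hY (sub_mem hα hβ)⟩
    · rw [map_sub, hβα]; abel
    · have hβ01 : D01 β = 0 := hβ01
      rw [map_sub, hβ01, sub_zero, add_comm, h₂]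

end IsFirstQuadrantSplitting

theorem statement13 {K M : Type} [Field K] [AddCommGroup M] [Module K M]
    (𝒞 : ℤ × ℤ → Submodule K M) [DirectSum.Decomposition 𝒞]
    (hfq : ∀ p q : ℤ, p < 0 ∨ q < 0 → 𝒞 (p, q) = ⊥)
    (D21 D10 D01 : M →ₗ[K] M)
    (h21 : ∀ p q : ℤ, (𝒞 (p, q)).map D21 ≤ 𝒞 (p + 2, q - 1))
    (h10 : ∀ p q : ℤ, (𝒞 (p, q)).map D10 ≤ 𝒞 (p + 1, q))
    (h01 : ∀ p q : ℤ, (𝒞 (p, q)).map D01 ≤ 𝒞 (p, q + 1))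
    (D : M →ₗ[K] M) (hDdef : D = D21 + D10 + D01) (hD : D ∘ₗ D = 0)
    -- `B¹(N₀, D̄)`, `B¹(C^{0,•}, D_{0,1})`, `B¹(C,D)`, `Z¹(N₀, D̄)`, `Z¹(C,D)`
    (BN1 : Submodule K M) (hBN1 : BN1 = Submodule.map D10 (𝒞 (0, 0) ⊓ LinearMap.ker D01))
    (Bcol : Submodule K M) (hBcol : Bcol = Submodule.map D01 (𝒞 (0, 0)))
    (B1 : Submodule K M) (hB1 : B1 = Submodule.map D (bdeg 𝒞 0))
    (ZN1 : Submodule K M) (hZN1 : ZN1 = 𝒞 (1, 0) ⊓ LinearMap.ker D10 ⊓ LinearMap.ker D01)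
    (Z1 : Submodule K M) (hZ1 : Z1 = bdeg 𝒞 1 ⊓ LinearMap.ker D)
    -- `ker ρ₁`, described explicitly
    (Kρ : Submodule K M)
    (hKρ : (Kρ : Set M) = {Y : M | Y ∈ 𝒞 (0, 1) ∧ D01 Y = 0 ∧
      ∃ α ∈ 𝒞 (1, 0), D01 α + D10 Y = 0 ∧
        D21 Y + D10 α ∈ Submodule.map D10 (𝒞 (1, 0) ⊓ LinearMap.ker D01)}) :
    Nonempty (↥B1 ≃ₗ[K] ↥BN1 × ↥Bcol) ∧
    Nonempty (↥Z1 ≃ₗ[K] ↥ZN1 × ↥Kρ) ∧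
    Nonempty ((↥Z1 ⧸ Submodule.comap Z1.subtype B1) ≃ₗ[K]
      (↥ZN1 ⧸ Submodule.comap ZN1.subtype BN1) ×
      (↥Kρ ⧸ Submodule.comap Kρ.subtype Bcol)) := by
  have hS : IsFirstQuadrantSplitting 𝒞 D21 D10 D01 D := ⟨hfq, h21, h10, h01, hDdef⟩
  have hmap_cocycles : (bdeg 𝒞 1 ⊓ LinearMap.ker D).map (bproj 𝒞 1) = Kρ :=
    SetLike.coe_injective (hS.coe_map_bproj_cocycles.trans hKρ.symm)
  have hZN1_le_ker : 𝒞 (1, 0) ⊓ LinearMap.ker D10 ⊓ LinearMap.ker D01 ≤ LinearMap.ker (bproj 𝒞 1) :=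
    hS.cocycles_inf_ker_bproj ▸ inf_le_right
  subst hBN1 hBcol hB1 hZN1 hZ1
  refine ⟨?_, ?_, ?_⟩
  · rw [← hS.map_bdeg_zero_inf_ker_bproj, ← hS.map_bproj_map_bdeg_zero]
    exact Submodule.nonempty_equiv_inf_ker_prod_map _ _
  · rw [← hS.cocycles_inf_ker_bproj, ← hmap_cocycles]
    exact Submodule.nonempty_equiv_inf_ker_prod_map _ _
  · have h := Submodule.nonempty_quotient_equiv_prod (bproj 𝒞 1) (bdeg 𝒞 1 ⊓ LinearMap.ker D)
      ((bdeg 𝒞 0).map D)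
    rw [inf_eq_right.2 (hS.map_bdeg_zero_le_cocycles hD), hS.map_bproj_map_bdeg_zero,
      hmap_cocycles, hS.cocycles_inf_ker_bproj] at h
    rwa [← hS.map_bdeg_zero_inf_ker_bproj, Submodule.comap_inf,
      Submodule.comap_subtype_eq_top.2 hZN1_le_ker, inf_top_eq]
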